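/- Let p be a prime, k ≥ 0 and l ≥ 1, and give A_{k+1,l} the A_{k,l}-algebra structure determined by sending the class of X in A_{k,l} to the class of X^p in A_{k+1,l}. Let N : A_{k+1,l} → A_{k,l} denote the norm map, defined as the determinant of the A_{k,l}-linear multiplication operator. Then N is additive modulo p: for all a, b ∈ A_{k+1,l}, N(a + b) − N(a) − N(b) ∈ p·A_{k,l}. -/

import Mathlib

/-!
Writing `β` for the class of `X` in `A_{k,l}`, the `A_{k,l}`-algebra `A_{k+1,l}` is
`A_{k,l}[Y]/(Y^p - β)`, because `f_{k+1,l}(X) = f_{k,l}(X^p)`. So it suffices to show that the norm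
of `R[Y]/(Y^p - β)` is additive modulo `p` for every commutative ring `R` and every `β ∈ R`.
The norm of this free algebra commutes with base change along ring maps `R → R'`, and every `R` is
a quotient of a polynomial ring over `ℤ`; so we may take `R = ℤ[(x_i)]` and reduce modulo `p`. Over
the domain `𝔽_p[(x_i)]` the Frobenius gives `(∑ e_i y^i)^p = ∑ e_i^p β^i ∈ R`, hence
`N(∑ e_i y^i) = ∑ e_i^p β^i`, which is additive in `(e_i)`.
-/

open Polynomial

section NormMap

variable {ι R S R' S' : Type*} [Fintype ι] [DecidableEq ι] [CommRing R] [CommRing S]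
  [CommRing R'] [CommRing S'] [Algebra R S] [Algebra R' S']
  (b : Module.Basis ι R S) (b' : Module.Basis ι R' S') (σ : R →+* R') (τ : S →+* S')
  (hτ : ∀ r, τ (algebraMap R S r) = algebraMap R' S' (σ r)) (hb : ∀ i, τ (b i) = b' i)
include hτ hb

theorem Module.Basis.repr_map_of_map_basis (z : S) (i : ι) :
    b'.repr (τ z) i = σ (b.repr z i) := by
  have hz : τ z = ∑ m, σ (b.repr z m) • b' m := by
    conv_lhs => rw [← b.sum_repr z]
    simp only [map_sum, Algebra.smul_def, map_mul, hτ, hb]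
  simp [hz, Finsupp.single_apply]

theorem Algebra.norm_map_of_map_basis (z : S) :
    Algebra.norm R' (τ z) = σ (Algebra.norm R z) := by
  rw [Algebra.norm_eq_matrix_det b, Algebra.norm_eq_matrix_det b', RingHom.map_det]
  congr 1
  ext i j
  simp only [RingHom.mapMatrix_apply, Matrix.map_apply, Algebra.leftMulMatrix_eq_repr_mul,
    ← hb j, ← map_mul, b.repr_map_of_map_basis b' σ τ hτ hb]

end NormMap

theorem eq_expand_of_mul_X_pow_sub_one {R : Type*} [CommRing R] [IsDomain R] {f g : R[X]}
    {m n p : ℕ} (hpm : p * m ≠ 0) (hf : f * (X ^ m - 1) = X ^ n - 1)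
    (hg : g * (X ^ (p * m) - 1) = X ^ (p * n) - 1) : g = expand R p f := by
  refine mul_right_cancel₀ (X_pow_sub_C_ne_zero (Nat.pos_of_ne_zero hpm) (1 : R)) ?_
  calc g * (X ^ (p * m) - C 1) = expand R p (f * (X ^ m - 1)) := by
        simpa [hf, pow_mul] using hg
    _ = expand R p f * (X ^ (p * m) - C 1) := by simp [pow_mul]

namespace AdjoinRoot

section XPowSubC

variable {R R' : Type*} [CommRing R] [CommRing R']

theorem map_surjective {σ : R →+* R'} (hσ : Function.Surjective σ) (f : R[X]) (g : R'[X])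
    (h : g ∣ f.map σ) : Function.Surjective (map σ f g h) := by
  intro z
  obtain ⟨z, rfl⟩ := mk_surjective z
  obtain ⟨w, rfl⟩ := Polynomial.map_surjective σ hσ z
  refine ⟨mk f w, ?_⟩
  rw [map, lift_mk, ← aeval_eq, aeval_def, algebraMap_eq, eval₂_map]

variable {n : ℕ}

theorem root_X_pow_sub_C_pow (β : R) : root (X ^ n - C β) ^ n = of _ β := by
  rw [← sub_eq_zero, ← eval₂_root (X ^ n - C β), eval₂_sub, eval₂_C, eval₂_pow, eval₂_X]

noncomputable def basisXPowSubC [Nontrivial R] (hn : n ≠ 0) (β : R) :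
    Module.Basis (Fin n) R (AdjoinRoot (X ^ n - C β)) :=
  (powerBasis' (monic_X_pow_sub_C β hn)).basis.reindex (finCongr natDegree_X_pow_sub_C)

theorem basisXPowSubC_apply [Nontrivial R] (hn : n ≠ 0) (β : R) (i : Fin n) :
    basisXPowSubC hn β i = root (X ^ n - C β) ^ (i : ℕ) := by
  rw [basisXPowSubC, Module.Basis.reindex_apply, PowerBasis.basis_eq_pow]
  rfl

theorem norm_map_X_pow_sub_C [Nontrivial R] [Nontrivial R'] (hn : n ≠ 0) (σ : R →+* R')
    (β : R) (β' : R') (h : X ^ n - C β' ∣ (X ^ n - C β).map σ) (z : AdjoinRoot (X ^ n - C β)) :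
    Algebra.norm R' (map σ _ _ h z) = σ (Algebra.norm R z) :=
  Algebra.norm_map_of_map_basis (basisXPowSubC hn β) (basisXPowSubC hn β') σ _
    (fun _ => map_of ..) (fun i => by simp [basisXPowSubC_apply]) z

end XPowSubC

section CharP

variable {R : Type*} [CommRing R] [IsDomain R] {p : ℕ} [hp : Fact p.Prime] [CharP R p]

theorem norm_eq_sum_repr_pow_mul (β : R) (z : AdjoinRoot (X ^ p - C β)) :
    Algebra.norm R z =
      ∑ i, (basisXPowSubC hp.out.ne_zero β).repr z i ^ p * β ^ (i : ℕ) := by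
  set b := basisXPowSubC hp.out.ne_zero β
  have : CharP (AdjoinRoot (X ^ p - C β)) p := charP_of_injective_ringHom
    (of.injective_of_degree_ne_zero (by simp [degree_X_pow_sub_C hp.out.pos, hp.out.ne_zero])) p
  have hzp : z ^ p = of _ (∑ i, b.repr z i ^ p * β ^ (i : ℕ)) := by
    conv_lhs => rw [← b.sum_repr z]
    simp only [sum_pow_char, map_sum, map_mul, map_pow, Algebra.smul_def, algebraMap_eq, mul_pow,
      b, basisXPowSubC_apply, pow_right_comm _ _ p, root_X_pow_sub_C_pow]
  apply frobenius_inj R p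
  rw [frobenius_def, frobenius_def, ← map_pow, hzp, ← algebraMap_eq,
    Algebra.norm_algebraMap_of_basis b, Fintype.card_fin]

theorem norm_add_of_charP (β : R) (x y : AdjoinRoot (X ^ p - C β)) :
    Algebra.norm R (x + y) = Algebra.norm R x + Algebra.norm R y := by
  simp only [norm_eq_sum_repr_pow_mul, map_add, Finsupp.add_apply, add_pow_char, add_mul,
    Finset.sum_add_distrib]

end CharP

section DvdNorm

variable {p : ℕ}

theorem natCast_dvd_norm_add_sub_norm_sub_norm_of_mvPolynomial {ι : Type*} (hp : p.Prime)
    (β : MvPolynomial ι ℤ) (x y : AdjoinRoot (X ^ p - C β)) :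
    (p : MvPolynomial ι ℤ) ∣
      Algebra.norm _ (x + y) - Algebra.norm _ x - Algebra.norm _ y := by
  have : Fact p.Prime := ⟨hp⟩
  rw [← map_natCast MvPolynomial.C, MvPolynomial.C_dvd_iff_map_hom_eq_zero
    (Int.castRingHom (ZMod p)) _ (fun r => ZMod.intCast_zmod_eq_zero_iff_dvd r p)]
  set π := MvPolynomial.map (σ := ι) (Int.castRingHom (ZMod p))
  have hπ : X ^ p - C (π β) ∣ (X ^ p - C β).map π := by simp
  simp only [map_sub, ← norm_map_X_pow_sub_C hp.ne_zero π β _ hπ, map_add, norm_add_of_charP,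
    add_sub_cancel_left, sub_self]

theorem natCast_dvd_norm_add_sub_norm_sub_norm {R S : Type*} [CommRing R] [CommRing S]
    [Algebra R S] (hp : p.Prime) {β : R} (e : AdjoinRoot (X ^ p - C β) ≃ₐ[R] S) (x y : S) :
    (p : R) ∣ Algebra.norm R (x + y) - Algebra.norm R x - Algebra.norm R y := by
  nontriviality R
  let σ : MvPolynomial R ℤ →+* R := MvPolynomial.eval₂Hom (Int.castRingHom R) id
  have hσ : X ^ p - C β ∣ (X ^ p - C (MvPolynomial.X β) : (MvPolynomial R ℤ)[X]).map σ := by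
    simp [σ]
  have hσ_surj : Function.Surjective σ := fun r => ⟨MvPolynomial.X r, by simp [σ]⟩
  obtain ⟨x, rfl⟩ := e.surjective.comp (map_surjective hσ_surj _ _ hσ) x
  obtain ⟨y, rfl⟩ := e.surjective.comp (map_surjective hσ_surj _ _ hσ) y
  simpa only [Function.comp_apply, ← map_add, Algebra.norm_eq_of_algEquiv,
    norm_map_X_pow_sub_C hp.ne_zero, ← map_sub, map_natCast] using
    map_dvd σ (natCast_dvd_norm_add_sub_norm_sub_norm_of_mvPolynomial hp _ x y)

end DvdNorm

section Expand

variable {R : Type*} [CommRing R] (f : R[X]) (p : ℕ)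
  [Algebra (AdjoinRoot f) (AdjoinRoot (expand R p f))]
  [IsScalarTower R (AdjoinRoot f) (AdjoinRoot (expand R p f))]

noncomputable def expandAlgEquiv
    (h : algebraMap (AdjoinRoot f) (AdjoinRoot (expand R p f)) (root f) = root _ ^ p) :
    AdjoinRoot (X ^ p - C (root f)) ≃ₐ[AdjoinRoot f] AdjoinRoot (expand R p f) := by
  let F : AdjoinRoot (X ^ p - C (root f)) →ₐ[AdjoinRoot f] AdjoinRoot (expand R p f) :=
    liftAlgHom _ (Algebra.ofId _ _) (root _) (by simp [h])
  let G₀ : AdjoinRoot (expand R p f) →ₐ[R] AdjoinRoot (X ^ p - C (root f)) :=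
    liftAlgHom _ (Algebra.ofId _ _) (root _) (by
      change aeval _ _ = 0
      rw [expand_aeval, root_X_pow_sub_C_pow, ← algebraMap_eq, aeval_algebraMap_apply, aeval_eq,
        mk_self, map_zero])
  have hG₀ : G₀.comp (IsScalarTower.toAlgHom R (AdjoinRoot f) _) =
      IsScalarTower.toAlgHom R _ _ := by
    ext
    simp [G₀, h, root_X_pow_sub_C_pow]
  let G : AdjoinRoot (expand R p f) →ₐ[AdjoinRoot f] AdjoinRoot (X ^ p - C (root f)) :=
    { G₀ with commutes' := fun a => congr($hG₀ a) }
  refine AlgEquiv.ofAlgHom F G ?_ ?_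
  · apply AlgHom.restrictScalars_injective R
    ext
    simp [F, G, G₀]
  · ext
    simp [F, G, G₀]

end Expand

end AdjoinRoot

theorem statement14_general (p : ℕ) (hp : p.Prime) (k l : ℕ)
    (f g : Polynomial ℤ)
    (hf : f * (Polynomial.X ^ (p ^ k) - 1) = Polynomial.X ^ (p ^ (k + l)) - 1)
    (hg : g * (Polynomial.X ^ (p ^ (k + 1)) - 1) = Polynomial.X ^ (p ^ (k + 1 + l)) - 1)
    (φ : (Polynomial ℤ ⧸ Ideal.span {f}) →+* (Polynomial ℤ ⧸ Ideal.span {g}))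
    (hφ : φ (Ideal.Quotient.mk (Ideal.span {f}) Polynomial.X) =
      Ideal.Quotient.mk (Ideal.span {g}) (Polynomial.X ^ p)) :
    ∀ a b : Polynomial ℤ ⧸ Ideal.span {g},
      (p : Polynomial ℤ ⧸ Ideal.span {f}) ∣
        (@Algebra.norm (Polynomial ℤ ⧸ Ideal.span {f}) (Polynomial ℤ ⧸ Ideal.span {g}) _ _
            φ.toAlgebra (a + b)
          - @Algebra.norm (Polynomial ℤ ⧸ Ideal.span {f}) (Polynomial ℤ ⧸ Ideal.span {g}) _ _
            φ.toAlgebra a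
          - @Algebra.norm (Polynomial ℤ ⧸ Ideal.span {f}) (Polynomial ℤ ⧸ Ideal.span {g}) _ _
            φ.toAlgebra b) := by
  intro a b
  obtain rfl : g = expand ℤ p f :=
    eq_expand_of_mul_X_pow_sub_one (mul_ne_zero hp.ne_zero (pow_ne_zero k hp.ne_zero)) hf
      (by rwa [add_right_comm, pow_succ', pow_succ'] at hg)
  let _ : Algebra (AdjoinRoot f) (AdjoinRoot (expand ℤ p f)) := φ.toAlgebra
  exact AdjoinRoot.natCast_dvd_norm_add_sub_norm_sub_norm hp
    (AdjoinRoot.expandAlgEquiv f p (hφ.trans (map_pow _ _ _))) a b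

/-- Let `p` be a prime, `k ≥ 0`, `l ≥ 1`, let
`f = f_{k,l} = (X^{p^{k+l}} - 1)/(X^{p^k} - 1)` and `g = f_{k+1,l}` in `ℤ[X]`, and put
`A_{k,l} = ℤ[X]/(f)`, `A_{k+1,l} = ℤ[X]/(g)`. Give `A_{k+1,l}` the `A_{k,l}`-algebra
structure determined by sending the class of `X` to the class of `X^p`, and let
`N : A_{k+1,l} → A_{k,l}` be the norm, i.e. the determinant of the multiplication
operator. Then `N` is additive modulo `p`: `N(a+b) - N(a) - N(b) ∈ p·A_{k,l}` for all
`a, b`. -/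
theorem statement14 (p : ℕ) (hp : p.Prime) (k l : ℕ) (hl : 1 ≤ l)
    (f g : Polynomial ℤ)
    (hf : f * (Polynomial.X ^ (p ^ k) - 1) = Polynomial.X ^ (p ^ (k + l)) - 1)
    (hg : g * (Polynomial.X ^ (p ^ (k + 1)) - 1) = Polynomial.X ^ (p ^ (k + 1 + l)) - 1)
    (φ : (Polynomial ℤ ⧸ Ideal.span {f}) →+* (Polynomial ℤ ⧸ Ideal.span {g}))
    (hφ : φ (Ideal.Quotient.mk (Ideal.span {f}) Polynomial.X) =
      Ideal.Quotient.mk (Ideal.span {g}) (Polynomial.X ^ p)) :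
    ∀ a b : Polynomial ℤ ⧸ Ideal.span {g},
      (p : Polynomial ℤ ⧸ Ideal.span {f}) ∣
        (@Algebra.norm (Polynomial ℤ ⧸ Ideal.span {f}) (Polynomial ℤ ⧸ Ideal.span {g}) _ _
            φ.toAlgebra (a + b)
          - @Algebra.norm (Polynomial ℤ ⧸ Ideal.span {f}) (Polynomial ℤ ⧸ Ideal.span {g}) _ _
            φ.toAlgebra a
          - @Algebra.norm (Polynomial ℤ ⧸ Ideal.span {f}) (Polynomial ℤ ⧸ Ideal.span {g}) _ _
            φ.toAlgebra b) :=
  statement14_general p hp k l f g hf hg φ hφ
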